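/- Let B be an n-dimensional vector space over a field K of characteristic zero with n ≥ 3, B* its dual, and w : B × B → B* a bilinear map. On L = B ⊕ B* define the product [b + β, b' + β'] = w(b,b') and the symmetric bilinear form φ(b + β, b' + β') = β(b') + β'(b). Then (L, φ) is a 2-step nilpotent quadratic Lie algebra (i.e. the product is a Lie bracket, φ is nondegenerate and invariant, and L is 2-step nilpotent) if and only if w is nonzero, skew-symmetric and cyclic, i.e. w(a,b)(c) = w(c,a)(b) = w(b,c)(a) for all a,b,c ∈ B. -/
import Mathlib


open Module

variable {K B : Type*}

/-- The bracket of the construction: `[b + β, b' + β'] = w(b,b')` on `L = B ⊕ B*`. -/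
def abelBr [Field K] [AddCommGroup B] [Module K B]
    (w : B →ₗ[K] B →ₗ[K] Module.Dual K B)
    (X Y : B × Module.Dual K B) : B × Module.Dual K B :=
  ((0 : B), w X.1 Y.1)

/-- The hyperbolic form `φ(b + β, b' + β') = β(b') + β'(b)` on `L = B ⊕ B*`. -/
def hypForm [Field K] [AddCommGroup B] [Module K B]
    (X Y : B × Module.Dual K B) : K :=
  X.2 Y.1 + Y.2 X.1

/-- For `B` an `n`-dimensional vector space (`n ≥ 3`) and `w : B × B → B*` bilinear,
the product `[b+β, b'+β'] = w(b,b')` together with the hyperbolic form makes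
`L = B ⊕ B*` a 2-step nilpotent quadratic Lie algebra if and only if `w` is nonzero,
skew-symmetric and cyclic. -/
theorem stmt15 [Field K] [CharZero K] [AddCommGroup B] [Module K B] [FiniteDimensional K B]
    (n : ℕ) (hn : 3 ≤ n) (hdim : Module.finrank K B = n)
    (w : B →ₗ[K] B →ₗ[K] Module.Dual K B) :
    ((∀ X Y : B × Module.Dual K B, abelBr w X Y = - abelBr w Y X) ∧
     (∀ X Y Z : B × Module.Dual K B,
        abelBr w X (abelBr w Y Z) + abelBr w Y (abelBr w Z X) +
          abelBr w Z (abelBr w X Y) = 0) ∧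
     (∀ X : B × Module.Dual K B, (∀ Y, hypForm X Y = (0 : K)) → X = 0) ∧
     (∀ X Y Z : B × Module.Dual K B, hypForm (abelBr w X Y) Z = hypForm X (abelBr w Y Z)) ∧
     (∀ X Y Z : B × Module.Dual K B, abelBr w X (abelBr w Y Z) = 0) ∧
     (∃ X Y : B × Module.Dual K B, abelBr w X Y ≠ 0))
    ↔
    (w ≠ 0 ∧ (∀ a b : B, w a b = - w b a) ∧
      (∀ a b c : B, w a b c = w c a b ∧ w c a b = w b c a)) := by
  constructor
  · rintro ⟨hskew, -, -, hinv, -, ⟨X, Y, hXY⟩⟩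
    have h1 : ∀ a b c : B, w a b c = w b c a := by
      intro a b c
      simpa [abelBr, hypForm] using hinv (a, 0) (b, 0) (c, 0)
    refine ⟨?_, ?_, fun a b c => ⟨(h1 a b c).trans (h1 b c a), (h1 c a b).trans (h1 a b c)⟩⟩
    · intro h0
      apply hXY
      simp [abelBr, h0, Prod.ext_iff]
    · intro a b
      simpa [abelBr, Prod.ext_iff] using hskew (a, 0) (b, 0)
  · rintro ⟨hw, hsk, hcyc⟩
    refine ⟨?_, ?_, ?_, ?_, ?_, ?_⟩
    · intro X Y
      simp [abelBr, Prod.ext_iff, hsk X.1 Y.1]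
    · intro X Y Z
      simp [abelBr, Prod.ext_iff]
    · intro X hX
      have h1 : X.2 = 0 := by
        ext y
        simpa [hypForm] using hX (y, 0)
      have h2 : X.1 = 0 := by
        rw [← Module.forall_dual_apply_eq_zero_iff K X.1]
        intro f
        simpa [hypForm, h1] using hX (0, f)
      exact Prod.ext h2 h1
    · intro X Y Z
      simp only [abelBr, hypForm]
      simp [(hcyc Y.1 Z.1 X.1).1.symm]
    · intro X Y Z
      simp [abelBr, Prod.ext_iff]
    · by_contra h
      push_neg at h
      apply hw
      ext a b
      have h2 := h (a, 0) (b, 0)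
      simp only [abelBr, Prod.ext_iff, Prod.fst_zero, Prod.snd_zero] at h2
      simp [h2.2]
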